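/- Let G be a graph and G' the graph obtained from G by the diameter-reduction construction (subdividing each edge once and adding an apex t joined to all original vertices, plus a triangle at t with new vertices t₁, t₂). Then G' has diameter at most 4. -/

import Mathlib

/-- Auxiliary relation for the graph `G'`: each edge `{a,b}` of `G` is subdivided
once by a new vertex, and three new mutually adjacent vertices `t = 0`, `t₁ = 1`,
`t₂ = 2` are added, with `t` moreover adjacent to every original vertex of `G`. -/
def GprimeRel {α : Type} (G : SimpleGraph α) :
    (α ⊕ ({e : Sym2 α // e ∈ G.edgeSet} ⊕ Fin 3)) →
    (α ⊕ ({e : Sym2 α // e ∈ G.edgeSet} ⊕ Fin 3)) → Prop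
  | Sum.inl a, Sum.inr (Sum.inl e) => a ∈ e.val
  | Sum.inl _, Sum.inr (Sum.inr t) => t = 0
  | Sum.inr (Sum.inr _), Sum.inr (Sum.inr _) => True
  | _, _ => False

/-- The graph `G'` obtained from `G` by the diameter-reduction construction. -/
def Gprime {α : Type} (G : SimpleGraph α) :
    SimpleGraph (α ⊕ ({e : Sym2 α // e ∈ G.edgeSet} ⊕ Fin 3)) :=
  SimpleGraph.fromRel (GprimeRel G)

/-- `v` lies on a 3-cycle of the graph `H`. -/
def InTriangle {V : Type*} (H : SimpleGraph V) (v : V) : Prop :=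
  ∃ u w, H.Adj v u ∧ H.Adj v w ∧ H.Adj u w

theorem SimpleGraph.exists_walk_length_le_of_forall_walk_to {V : Type*} (H : SimpleGraph V)
    (c : V) (r : ℕ) (hc : ∀ v, ∃ p : H.Walk v c, p.length ≤ r) (u v : V) :
    ∃ p : H.Walk u v, p.length ≤ 2 * r := by
  obtain ⟨p, hp⟩ := hc u
  obtain ⟨q, hq⟩ := hc v
  exact ⟨p.append q.reverse, by simp only [SimpleGraph.Walk.length_append,
    SimpleGraph.Walk.length_reverse]; omega⟩

namespace Gprime

variable {α : Type} (G : SimpleGraph α)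

abbrev apex : α ⊕ ({e : Sym2 α // e ∈ G.edgeSet} ⊕ Fin 3) := Sum.inr (Sum.inr 0)

theorem adj_inl_apex (a : α) : (Gprime G).Adj (Sum.inl a) (apex G) :=
  (SimpleGraph.fromRel_adj _ _ _).2 ⟨by simp, Or.inl rfl⟩

theorem adj_inl_edge {a : α} {e : {e : Sym2 α // e ∈ G.edgeSet}} (h : a ∈ e.val) :
    (Gprime G).Adj (Sum.inl a) (Sum.inr (Sum.inl e)) :=
  (SimpleGraph.fromRel_adj _ _ _).2 ⟨by simp, Or.inl h⟩

theorem adj_triangle {i j : Fin 3} (h : i ≠ j) :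
    (Gprime G).Adj (Sum.inr (Sum.inr i)) (Sum.inr (Sum.inr j)) :=
  (SimpleGraph.fromRel_adj _ _ _).2 ⟨by simpa using h, Or.inl trivial⟩

theorem exists_walk_to_apex (v : α ⊕ ({e : Sym2 α // e ∈ G.edgeSet} ⊕ Fin 3)) :
    ∃ p : (Gprime G).Walk v (apex G), p.length ≤ 2 := by
  rcases v with a | e | i
  · exact ⟨(adj_inl_apex G a).toWalk, by simp⟩
  · let a := e.val.out.1
    have hae : (Gprime G).Adj (Sum.inr (Sum.inl e)) (Sum.inl a) :=
      (adj_inl_edge G (Sym2.out_fst_mem e.val)).symm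
    exact ⟨.cons hae (adj_inl_apex G a).toWalk, by simp⟩
  · by_cases hi : i = 0
    · subst hi
      exact ⟨.nil, by simp⟩
    · exact ⟨(adj_triangle G hi).toWalk, by simp⟩

end Gprime

theorem Gprime_diameter_le_four_general {α : Type} (G : SimpleGraph α) :
    ∀ u v : α ⊕ ({e : Sym2 α // e ∈ G.edgeSet} ⊕ Fin 3),
      ∃ p : (Gprime G).Walk u v, p.length ≤ 4 :=
  (Gprime G).exists_walk_length_le_of_forall_walk_to _ 2 (Gprime.exists_walk_to_apex G)

/-- The graph `G'` has diameter at most `4`: any two vertices are joined by a walk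
of length at most `4`. -/
theorem Gprime_diameter_le_four {α : Type} [Nonempty α] (G : SimpleGraph α) :
    ∀ u v : α ⊕ ({e : Sym2 α // e ∈ G.edgeSet} ⊕ Fin 3),
      ∃ p : (Gprime G).Walk u v, p.length ≤ 4 :=
  Gprime_diameter_le_four_general G
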